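/- arXiv:2404.10515 — 5 statements merged into one kernel-verified Lean document; each statement's English description precedes it below -/
import Mathlib

section
/- Let n ∈ ℕ, let f : (Fin n → ℝ) → ℝ be twice continuously differentiable (ContDiff ℝ 2 on EuclideanSpace, identifying (Fin n → ℝ) with ℝⁿ), and let p q : Fin n with p ≠ q. If there exist a point x : Fin n → ℝ and real numbers a, b₁, b₂, δ such that f(Function.update (Function.update x q b₁) p (a+δ)) − f(Function.update (Function.update x q b₁) p a) ≠ f(Function.update (Function.update x q b₂) p (a+δ)) − f(Function.update (Function.update x q b₂) p a), then x_p and x_q directly interact, i.e., there exists a point x* : Fin n → ℝ at which the second mixed partial derivative of f in directions p and q is nonzero: iteratedFDeriv ℝ 2 f x* applied to (e_p, e_q) ≠ 0, where e_p, e_q are the standard basis vectors. -/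
/-! If the mixed partial `∂_p ∂_q f` vanished everywhere, then `∂_q f` would be constant
along every line in direction `e_p`. The forward difference `f(· + (a + δ) e_p) - f(· + a e_p)`
would then have zero derivative in direction `e_q`, so it could not depend on `x_q`. -/

open Function

section MixedPartial

variable {𝕜 E F : Type*} [RCLike 𝕜] [NormedAddCommGroup E] [NormedSpace 𝕜 E]
  [NormedAddCommGroup F] [NormedSpace 𝕜 F]

theorem apply_add_smul_eq_of_fderiv_apply_eq_zero {g : E → F} (hg : Differentiable 𝕜 g)
    {v : E} (hv : ∀ y, fderiv 𝕜 g y v = 0) (z : E) (s t : 𝕜) :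
    g (z + s • v) = g (z + t • v) := by
  have hline : ∀ r : 𝕜, HasDerivAt (fun r : 𝕜 => g (z + r • v)) 0 r := fun r => by
    simpa [comp_def, hv] using (hg _).hasFDerivAt.comp_hasDerivAt r
      (((hasDerivAt_id r).smul_const v).const_add z)
  exact is_const_of_deriv_eq_zero (fun r => (hline r).differentiableAt)
    (fun r => (hline r).deriv) s t

variable {f : E → F} {v w : E}

theorem fderiv_apply_add_smul_eq_of_iteratedFDeriv_eq_zero (hf : ContDiff 𝕜 2 f)
    (hvw : ∀ y, iteratedFDeriv 𝕜 2 f y ![v, w] = 0) (z : E) (s t : 𝕜) :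
    fderiv 𝕜 f (z + s • v) w = fderiv 𝕜 f (z + t • v) w := by
  have hdf : Differentiable 𝕜 (fderiv 𝕜 f) :=
    (hf.fderiv_right (by norm_num)).differentiable one_ne_zero
  refine apply_add_smul_eq_of_fderiv_apply_eq_zero (g := fun y => fderiv 𝕜 f y w)
    (fun y => (hdf y).clm_apply (differentiableAt_const w)) (fun y => ?_) z s t
  rw [fderiv_clm_apply (hdf y) (differentiableAt_const w)]
  simpa [iteratedFDeriv_two_apply] using hvw y

theorem sub_apply_add_smul_eq_of_iteratedFDeriv_eq_zero (hf : ContDiff 𝕜 2 f)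
    (hvw : ∀ y, iteratedFDeriv 𝕜 2 f y ![v, w] = 0) (z : E) (s s' t t' : 𝕜) :
    f (z + t • w + s • v) - f (z + t • w + s' • v) =
      f (z + t' • w + s • v) - f (z + t' • w + s' • v) := by
  have hf1 : Differentiable 𝕜 f := hf.differentiable two_ne_zero
  have hshift : ∀ c y : E, HasFDerivAt (fun y => f (y + c)) (fderiv 𝕜 f (y + c)) y :=
    fun c y => (hf1 _).hasFDerivAt.comp y ((hasFDerivAt_id y).add_const c)
  have hdiff : ∀ y, HasFDerivAt (fun y => f (y + s • v) - f (y + s' • v))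
      (fderiv 𝕜 f (y + s • v) - fderiv 𝕜 f (y + s' • v)) y := fun y =>
    (hshift _ y).sub (hshift _ y)
  refine apply_add_smul_eq_of_fderiv_apply_eq_zero
    (fun y => (hdiff y).differentiableAt) (fun y => ?_) z t t'
  rw [(hdiff y).fderiv, sub_apply, sub_eq_zero]
  exact fderiv_apply_add_smul_eq_of_iteratedFDeriv_eq_zero hf hvw y s s'

end MixedPartial

theorem update_update_eq_add_smul_single {ι R : Type*} [DecidableEq ι] [Semiring R] {p q : ι}
    (hpq : p ≠ q) (x : ι → R) (s t : R) :
    update (update x q t) p s =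
      update (update x q 0) p 0 + t • Pi.single q 1 + s • Pi.single p 1 := by
  ext i
  rcases eq_or_ne i p with rfl | hip
  · simp [hpq]
  rcases eq_or_ne i q with rfl | hiq
  · simp [hip]
  · simp [hip, hiq]

theorem dg_finite_difference_detects_direct_interaction
    (n : ℕ) (f : (Fin n → ℝ) → ℝ) (hf : ContDiff ℝ 2 f)
    (p q : Fin n) (hpq : p ≠ q)
    (x : Fin n → ℝ) (a b₁ b₂ δ : ℝ)
    (hne : f (Function.update (Function.update x q b₁) p (a + δ)) -
        f (Function.update (Function.update x q b₁) p a) ≠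
      f (Function.update (Function.update x q b₂) p (a + δ)) -
        f (Function.update (Function.update x q b₂) p a)) :
    ∃ xstar : Fin n → ℝ,
      iteratedFDeriv ℝ 2 f xstar ![Pi.single p (1 : ℝ), Pi.single q (1 : ℝ)] ≠ 0 := by
  by_contra! hvanish
  apply hne
  rw [update_update_eq_add_smul_single hpq x (a + δ) b₁,
    update_update_eq_add_smul_single hpq x a b₁,
    update_update_eq_add_smul_single hpq x (a + δ) b₂,
    update_update_eq_add_smul_single hpq x a b₂]
  exact sub_apply_add_smul_eq_of_iteratedFDeriv_eq_zero hf hvanish _ _ _ _ _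
end

section
/- Let n ∈ ℕ, let f : (Fin n → ℝ) → ℝ be twice continuously differentiable, and let p q : Fin n with p ≠ q. If x_p and x_q directly interact (there exists x* with the second mixed partial derivative of f in directions p and q nonzero at x*, i.e., iteratedFDeriv ℝ 2 f x* (e_p, e_q) ≠ 0), then there exist a point x : Fin n → ℝ and real numbers a, b₁, b₂, δ with δ ≠ 0 and b₁ ≠ b₂ such that f(Function.update (Function.update x q b₁) p (a+δ)) − f(Function.update (Function.update x q b₁) p a) ≠ f(Function.update (Function.update x q b₂) p (a+δ)) − f(Function.update (Function.update x q b₂) p a). -/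
/-! If no finite-difference witness exists, then for every step `s` along `e_p` the increment
`y ↦ f (y + s • e_p) - f y` is constant along `e_q`, so its derivative in direction `e_q`
vanishes: `∂_q f` is invariant under shifts along `e_p`. Differentiating once more in direction
`e_p` gives `∂_p ∂_q f = 0` everywhere, contradicting the direct interaction. -/

section

variable {𝕜 : Type*} [NontriviallyNormedField 𝕜]
  {E : Type*} [NormedAddCommGroup E] [NormedSpace 𝕜 E]
  {F : Type*} [NormedAddCommGroup F] [NormedSpace 𝕜 F]

theorem fderiv_apply_eq_zero_of_forall_add_smul_eq {g : E → F} {x v : E}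
    (hg : DifferentiableAt 𝕜 g x) (hconst : ∀ t : 𝕜, g (x + t • v) = g x) :
    fderiv 𝕜 g x v = 0 := by
  rw [← hg.lineDeriv_eq_fderiv, lineDeriv, funext hconst, deriv_const]

theorem fderiv_fderiv_apply_eq_zero_of_increments_shift_invariant {f : E → F} {x u v : E}
    (hf : Differentiable 𝕜 f) (hf' : DifferentiableAt 𝕜 (fderiv 𝕜 f) x)
    (hinv : ∀ (y : E) (s t : 𝕜), f (y + t • v + s • u) - f (y + t • v) = f (y + s • u) - f y) :
    fderiv 𝕜 (fderiv 𝕜 f) x u v = 0 := by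
  have hshift : ∀ (s : 𝕜) (y : E), fderiv 𝕜 f (y + s • u) v = fderiv 𝕜 f y v := by
    intro s y
    have hshifted : DifferentiableAt 𝕜 (fun z => f (z + s • u)) y :=
      (hf _).comp y (differentiableAt_id.add_const _)
    have hincr := fderiv_apply_eq_zero_of_forall_add_smul_eq (hshifted.sub (hf y)) (hinv y s)
    rwa [fderiv_sub hshifted (hf y), fderiv_comp_add_right, sub_apply, sub_eq_zero] at hincr
  have hg : DifferentiableAt 𝕜 (fun y => fderiv 𝕜 f y v) x :=
    hf'.clm_apply (differentiableAt_const v)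
  have hpartial := fderiv_apply_eq_zero_of_forall_add_smul_eq hg fun s => hshift s x
  simpa [fderiv_clm_apply hf' (differentiableAt_const v)] using hpartial

end

theorem Function.update_update_eq_add_smul_single {ι : Type*} [DecidableEq ι]
    {R : Type*} [Ring R] {p q : ι} (hpq : p ≠ q) (y : ι → R) (a b : R) :
    Function.update (Function.update y q b) p a =
      y + (b - y q) • Pi.single q 1 + (a - y p) • Pi.single p 1 := by
  ext i
  rcases eq_or_ne i p with rfl | hip
  · simp [hpq]
  rcases eq_or_ne i q with rfl | hiq
  · simp [hip]
  · simp [hip, hiq]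

theorem dg_direct_interaction_has_finite_difference_witness
    (n : ℕ) (f : (Fin n → ℝ) → ℝ) (hf : ContDiff ℝ 2 f)
    (p q : Fin n) (hpq : p ≠ q)
    (hint : ∃ xstar : Fin n → ℝ,
      iteratedFDeriv ℝ 2 f xstar ![Pi.single p (1 : ℝ), Pi.single q (1 : ℝ)] ≠ 0) :
    ∃ (x : Fin n → ℝ) (a b₁ b₂ δ : ℝ), δ ≠ 0 ∧ b₁ ≠ b₂ ∧
      f (Function.update (Function.update x q b₁) p (a + δ)) -
        f (Function.update (Function.update x q b₁) p a) ≠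
      f (Function.update (Function.update x q b₂) p (a + δ)) -
        f (Function.update (Function.update x q b₂) p a) := by
  obtain ⟨xstar, hxstar⟩ := hint
  by_contra! hcon
  refine hxstar ?_
  rw [iteratedFDeriv_two_apply]
  refine fderiv_fderiv_apply_eq_zero_of_increments_shift_invariant (hf.differentiable two_ne_zero)
    ((hf.fderiv_right le_rfl).differentiable one_ne_zero xstar) fun y s t => ?_
  rcases eq_or_ne s 0 with rfl | hs
  · simp
  rcases eq_or_ne t 0 with rfl | ht
  · simp
  have hincr := hcon y (y p) (y q + t) (y q) s hs (by simpa using ht)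
  simp only [Function.update_update_eq_add_smul_single hpq] at hincr
  simpa using hincr
end

section
/- Let n ∈ ℕ, let f : (Fin n → ℝ) → ℝ, and let X₁, X₂ ⊆ Fin n be disjoint sets of coordinates. Suppose there exist g, h : (Fin n → ℝ) → ℝ with f = g + h, where g does not depend on any coordinate in X₂ (for all x, all q ∈ X₂ and all v, g (Function.update x q v) = g x) and h does not depend on any coordinate in X₁. Then for every point x* : Fin n → ℝ, all vectors u₁, u₂ : Fin n → ℝ with u₁ supported on X₁ (u₁ i = 0 for i ∉ X₁) and u₂ supported on X₂ (u₂ i = 0 for i ∉ X₂), and all real numbers l₁, l₂: f(x* + l₁·u₁ + l₂·u₂) − f(x* + l₂·u₂) = f(x* + l₁·u₁) − f(x*). -/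
/-!
Invariance under updating any single coordinate of `S` propagates, over finitely many
coordinates, to invariance under every perturbation supported on `S`. So `g` absorbs `l₂ • u₂`
and `h` absorbs `l₁ • u₁`, and both differences reduce to `g (x* + l₁ • u₁) - g x*`.
-/

open Function

section CoordinateInvariance

variable {ι α β : Type*} [DecidableEq ι] {φ : (ι → α) → β} {S : Set ι}

theorem apply_piecewise_eq_of_update_invariant
    (hφ : ∀ x, ∀ i ∈ S, ∀ a, φ (update x i a) = φ x) (x y : ι → α) (s : Finset ι)
    (hs : ↑s ⊆ S) : φ (s.piecewise y x) = φ x := by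
  induction s using Finset.induction_on with
  | empty => rw [Finset.piecewise_empty]
  | insert i s _ ih =>
    rw [Finset.piecewise_insert, hφ _ i (hs (Finset.mem_insert_self i s)),
      ih ((Finset.coe_subset.2 (Finset.subset_insert i s)).trans hs)]

theorem apply_eq_of_eqOn_compl_of_update_invariant [Finite ι]
    (hφ : ∀ x, ∀ i ∈ S, ∀ a, φ (update x i a) = φ x) {x y : ι → α}
    (hxy : ∀ i ∉ S, y i = x i) : φ y = φ x := by
  classical
  have := Fintype.ofFinite ι
  have hy : (Finset.univ.filter (· ∈ S)).piecewise y x = y := by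
    ext i
    by_cases hi : i ∈ S <;> simp [Finset.piecewise, hi, hxy]
  rw [← hy, apply_piecewise_eq_of_update_invariant (φ := φ) hφ x y]
  simp

theorem apply_add_eq_of_update_invariant [Finite ι] [AddZeroClass α]
    (hφ : ∀ x, ∀ i ∈ S, ∀ a, φ (update x i a) = φ x) (x : ι → α) {w : ι → α}
    (hw : ∀ i ∉ S, w i = 0) : φ (x + w) = φ x :=
  apply_eq_of_eqOn_compl_of_update_invariant hφ fun i hi => by simp [hw i hi]

end CoordinateInvariance

theorem rdg_separable_set_difference_invariant_general
    (n : ℕ) (f : (Fin n → ℝ) → ℝ) (X₁ X₂ : Set (Fin n))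
    (g h : (Fin n → ℝ) → ℝ) (hf : f = g + h)
    (hg : ∀ (x : Fin n → ℝ), ∀ q ∈ X₂, ∀ v : ℝ, g (Function.update x q v) = g x)
    (hh : ∀ (x : Fin n → ℝ), ∀ p ∈ X₁, ∀ v : ℝ, h (Function.update x p v) = h x) :
    ∀ (xstar u₁ u₂ : Fin n → ℝ),
      (∀ i ∉ X₁, u₁ i = 0) → (∀ i ∉ X₂, u₂ i = 0) →
      ∀ l₁ l₂ : ℝ,
        f (xstar + l₁ • u₁ + l₂ • u₂) - f (xstar + l₂ • u₂) =
        f (xstar + l₁ • u₁) - f xstar := by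
  intro xstar u₁ u₂ hu₁ hu₂ l₁ l₂
  have hg₂ (x : Fin n → ℝ) : g (x + l₂ • u₂) = g x :=
    apply_add_eq_of_update_invariant hg x fun i hi => by simp [hu₂ i hi]
  have hh₁ (x : Fin n → ℝ) : h (x + l₁ • u₁) = h x :=
    apply_add_eq_of_update_invariant hh x fun i hi => by simp [hu₁ i hi]
  subst hf
  simp only [Pi.add_apply]
  rw [hg₂, hg₂, add_right_comm, hh₁, hh₁]
  ring

theorem rdg_separable_set_difference_invariant
    (n : ℕ) (f : (Fin n → ℝ) → ℝ) (X₁ X₂ : Set (Fin n)) (hdisj : Disjoint X₁ X₂)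
    (g h : (Fin n → ℝ) → ℝ) (hf : f = g + h)
    (hg : ∀ (x : Fin n → ℝ), ∀ q ∈ X₂, ∀ v : ℝ, g (Function.update x q v) = g x)
    (hh : ∀ (x : Fin n → ℝ), ∀ p ∈ X₁, ∀ v : ℝ, h (Function.update x p v) = h x) :
    ∀ (xstar u₁ u₂ : Fin n → ℝ),
      (∀ i ∉ X₁, u₁ i = 0) → (∀ i ∉ X₂, u₂ i = 0) →
      ∀ l₁ l₂ : ℝ,
        f (xstar + l₁ • u₁ + l₂ • u₂) - f (xstar + l₂ • u₂) =
        f (xstar + l₁ • u₁) - f xstar :=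
  rdg_separable_set_difference_invariant_general n f X₁ X₂ g h hf hg hh
end

section
/- Let n ∈ ℕ, let f : (Fin n → ℝ) → ℝ be twice continuously differentiable, and let X₁, X₂ ⊆ Fin n be disjoint sets of coordinates. Suppose there exist a point x* : Fin n → ℝ, vectors u₁, u₂ : Fin n → ℝ with u₁ supported on X₁ and u₂ supported on X₂, and real numbers l₁, l₂ > 0 such that f(x* + l₁·u₁ + l₂·u₂) − f(x* + l₂·u₂) ≠ f(x* + l₁·u₁) − f(x*). Then X₁ interacts with X₂: there exist i ∈ X₁, j ∈ X₂ and a point y : Fin n → ℝ such that the second mixed partial derivative of f in directions i and j is nonzero at y, i.e., iteratedFDeriv ℝ 2 f y (e_i, e_j) ≠ 0. -/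
/-!
If every mixed partial `∂ᵢ∂ⱼf` with `i ∈ X₁`, `j ∈ X₂` vanished identically, then by bilinearity
so would `D²f(y)(u₁, u₂)`. Hence the directional derivative `D_{u₂} f` is constant along `u₁`, so
`t ↦ f (x + l₁ • u₁ + t • u₂) - f (x + t • u₂)` has zero derivative and the finite difference
at `t = l₂` equals the one at `t = 0`.
-/

open ContinuousLinearMap

theorem ContinuousLinearMap.apply_apply_eq_zero_of_single_of_support
    {ι 𝕜 F : Type*} [Fintype ι] [DecidableEq ι] [NontriviallyNormedField 𝕜]
    [NormedAddCommGroup F] [NormedSpace 𝕜 F]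
    (B : (ι → 𝕜) →L[𝕜] (ι → 𝕜) →L[𝕜] F) {s t : Set ι}
    (hB : ∀ i ∈ s, ∀ j ∈ t, B (Pi.single i 1) (Pi.single j 1) = 0)
    {u v : ι → 𝕜} (hu : ∀ i ∉ s, u i = 0) (hv : ∀ j ∉ t, v j = 0) :
    B u v = 0 := by
  have hterm : ∀ i j, B (Pi.single i (u i)) (Pi.single j (v j)) = 0 := by
    intro i j
    by_cases hi : i ∈ s
    · by_cases hj : j ∈ t
      · rw [← mul_one (u i), ← mul_one (v j), ← smul_eq_mul, ← smul_eq_mul, Pi.single_smul',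
          Pi.single_smul', map_smul, map_smul, smul_apply, hB i hi j hj, smul_zero, smul_zero]
      · simp [hv j hj]
    · simp [hu i hi]
  rw [← Finset.univ_sum_single u, ← Finset.univ_sum_single v]
  simp only [map_sum, sum_apply, hterm, Finset.sum_const_zero]

section MixedDifference

variable {E G : Type*} [NormedAddCommGroup E] [NormedSpace ℝ E]
  [NormedAddCommGroup G] [NormedSpace ℝ G]

theorem HasFDerivAt.hasDerivAt_comp_add_smul {f : E → G} {f' : E →L[ℝ] G} {x v : E} {t : ℝ}
    (hf : HasFDerivAt f f' (x + t • v)) :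
    HasDerivAt (fun s : ℝ => f (x + s • v)) (f' v) t :=
  hf.comp_hasDerivAt t <| (((hasDerivAt_id t).smul_const v).const_add x).congr_deriv (one_smul ℝ v)

theorem is_const_of_hasDerivAt_zero {g : ℝ → G} (hg : ∀ t, HasDerivAt g 0 t) (a b : ℝ) :
    g a = g b :=
  is_const_of_deriv_eq_zero (fun t => (hg t).differentiableAt) (fun t => (hg t).deriv) a b

theorem fderiv_apply_add_smul_eq_of_fderiv_fderiv_eq_zero {f : E → G} (hf : ContDiff ℝ 2 f)
    {u v : E} (h : ∀ y, fderiv ℝ (fderiv ℝ f) y u v = 0) (y : E) (a : ℝ) :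
    fderiv ℝ f (y + a • u) v = fderiv ℝ f y v := by
  have hf' : Differentiable ℝ (fderiv ℝ f) := (hf.fderiv_right le_rfl).differentiable one_ne_zero
  have hderiv (t : ℝ) : HasDerivAt (fun s : ℝ => fderiv ℝ f (y + s • u) v) 0 t := by
    simpa [h] using ((apply ℝ G v).hasFDerivAt.comp _ (hf' (y + t • u)).hasFDerivAt
      |>.hasDerivAt_comp_add_smul)
  simpa using is_const_of_hasDerivAt_zero hderiv a 0

theorem sub_eq_sub_of_fderiv_fderiv_eq_zero {f : E → G} (hf : ContDiff ℝ 2 f)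
    {u v : E} (h : ∀ y, fderiv ℝ (fderiv ℝ f) y u v = 0) (x : E) (a b : ℝ) :
    f (x + a • u + b • v) - f (x + b • v) = f (x + a • u) - f x := by
  have hfd : Differentiable ℝ f := hf.differentiable two_ne_zero
  have hderiv (t : ℝ) :
      HasDerivAt (fun s : ℝ => f (x + a • u + s • v) - f (x + s • v)) 0 t := by
    have hshift := fderiv_apply_add_smul_eq_of_fderiv_fderiv_eq_zero hf h (x + t • v) a
    rw [add_right_comm] at hshift
    have hsub := ((hfd (x + a • u + t • v)).hasFDerivAt.hasDerivAt_comp_add_smul).sub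
      (hfd (x + t • v)).hasFDerivAt.hasDerivAt_comp_add_smul
    rwa [hshift, sub_self] at hsub
  simpa using is_const_of_hasDerivAt_zero hderiv b 0

end MixedDifference

theorem rdg_set_finite_difference_detects_interaction_general
    (n : ℕ) (f : (Fin n → ℝ) → ℝ) (hf : ContDiff ℝ 2 f)
    (X₁ X₂ : Set (Fin n))
    (xstar u₁ u₂ : Fin n → ℝ)
    (hu₁ : ∀ i ∉ X₁, u₁ i = 0) (hu₂ : ∀ i ∉ X₂, u₂ i = 0)
    (l₁ l₂ : ℝ)
    (hne : f (xstar + l₁ • u₁ + l₂ • u₂) - f (xstar + l₂ • u₂) ≠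
      f (xstar + l₁ • u₁) - f xstar) :
    ∃ i ∈ X₁, ∃ j ∈ X₂, ∃ y : Fin n → ℝ,
      iteratedFDeriv ℝ 2 f y ![Pi.single i (1 : ℝ), Pi.single j (1 : ℝ)] ≠ 0 := by
  by_contra! hcon
  refine hne (sub_eq_sub_of_fderiv_fderiv_eq_zero hf (fun y => ?_) xstar l₁ l₂)
  refine (fderiv ℝ (fderiv ℝ f) y).apply_apply_eq_zero_of_single_of_support (fun i hi j hj => ?_)
    hu₁ hu₂
  simpa [iteratedFDeriv_two_apply] using hcon i hi j hj y

theorem rdg_set_finite_difference_detects_interaction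
    (n : ℕ) (f : (Fin n → ℝ) → ℝ) (hf : ContDiff ℝ 2 f)
    (X₁ X₂ : Set (Fin n)) (hdisj : Disjoint X₁ X₂)
    (xstar u₁ u₂ : Fin n → ℝ)
    (hu₁ : ∀ i ∉ X₁, u₁ i = 0) (hu₂ : ∀ i ∉ X₂, u₂ i = 0)
    (l₁ l₂ : ℝ) (hl₁ : 0 < l₁) (hl₂ : 0 < l₂)
    (hne : f (xstar + l₁ • u₁ + l₂ • u₂) - f (xstar + l₂ • u₂) ≠
      f (xstar + l₁ • u₁) - f xstar) :
    ∃ i ∈ X₁, ∃ j ∈ X₂, ∃ y : Fin n → ℝ,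
      iteratedFDeriv ℝ 2 f y ![Pi.single i (1 : ℝ), Pi.single j (1 : ℝ)] ≠ 0 :=
  rdg_set_finite_difference_detects_interaction_general n f hf X₁ X₂ xstar u₁ u₂ hu₁ hu₂ l₁ l₂ hne
end

section
/- Let n ∈ ℕ, let f : (Fin n → ℝ) → ℝ be twice continuously differentiable, let p q : Fin n with p ≠ q, and suppose the second mixed partial derivative of f in directions p and q vanishes everywhere: iteratedFDeriv ℝ 2 f y (e_p, e_q) = 0 for all y : Fin n → ℝ. Then for every x : Fin n → ℝ and all δ, γ ∈ ℝ, the second-order rectangle difference vanishes: f(x + δ·e_p + γ·e_q) − f(x + γ·e_q) − f(x + δ·e_p) + f(x) = 0. -/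
/-!
The partial derivative `∂_v f` has zero derivative in the direction `w`: by symmetry of the
second derivative this is the vanishing mixed partial. Hence `∂_v f` is invariant under
translation by `t • w`, so `y ↦ f (y + t • w) - f y` has zero derivative in the direction `v`
and is invariant under translation by `s • v`; comparing its values at `x` and `x + s • v`
gives the rectangle difference.
-/

variable {E F : Type*} [NormedAddCommGroup E] [NormedSpace ℝ E]
  [NormedAddCommGroup F] [NormedSpace ℝ F]

theorem add_smul_eq_of_hasFDerivAt_apply_eq_zero {f : E → F} {f' : E → E →L[ℝ] F}
    (hf : ∀ y, HasFDerivAt f (f' y) y) {v : E} (hv : ∀ y, f' y v = 0) (x : E) (t : ℝ) :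
    f (x + t • v) = f x := by
  have hline : ∀ s : ℝ, HasDerivAt (fun s : ℝ => f (x + s • v)) 0 s := fun s => by
    simpa [hv, Function.comp_def] using
      (hf _).comp_hasDerivAt s (((hasDerivAt_id s).smul_const v).const_add x)
  simpa using is_const_of_deriv_eq_zero (fun s => (hline s).differentiableAt)
    (fun s => (hline s).deriv) t 0

theorem rectangle_difference_eq_zero_of_iteratedFDeriv_two_eq_zero {f : E → F}
    (hf : ContDiff ℝ 2 f) {v w : E} (hvw : ∀ y, iteratedFDeriv ℝ 2 f y ![v, w] = 0)
    (x : E) (s t : ℝ) :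
    f (x + s • v + t • w) - f (x + t • w) - f (x + s • v) + f x = 0 := by
  have hf1 : Differentiable ℝ f := hf.differentiable two_ne_zero
  have hf2 : Differentiable ℝ (fderiv ℝ f) :=
    (hf.fderiv_right one_add_one_eq_two.le).differentiable one_ne_zero
  have hmixed : ∀ y, fderiv ℝ (fderiv ℝ f) y w v = 0 := fun y => by
    rw [(hf.contDiffAt.isSymmSndFDerivAt (by simp)) w v]
    simpa [iteratedFDeriv_two_apply] using hvw y
  have hpartial : ∀ y, fderiv ℝ f (y + t • w) v = fderiv ℝ f y v :=
    fun y => add_smul_eq_of_hasFDerivAt_apply_eq_zero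
      (fun y => (ContinuousLinearMap.apply ℝ F v).hasFDerivAt.comp y (hf2 y).hasFDerivAt)
      (by simpa using hmixed) y t
  have hslice := add_smul_eq_of_hasFDerivAt_apply_eq_zero
    (f := fun y => f (y + t • w) - f y)
    (fun y => ((hf1 _).hasFDerivAt.comp y ((hasFDerivAt_id y).add_const (t • w))).sub
      (hf1 y).hasFDerivAt)
    (by simpa using fun y => sub_eq_zero.mpr (hpartial y)) x s
  rw [← sub_eq_zero] at hslice
  rw [← hslice]
  abel

theorem no_direct_interaction_rectangle_difference_vanishes_general
    (n : ℕ) (f : (Fin n → ℝ) → ℝ) (hf : ContDiff ℝ 2 f)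
    (p q : Fin n)
    (hzero : ∀ y : Fin n → ℝ,
      iteratedFDeriv ℝ 2 f y ![Pi.single p (1 : ℝ), Pi.single q (1 : ℝ)] = 0) :
    ∀ (x : Fin n → ℝ) (δ γ : ℝ),
      f (x + δ • (Pi.single p (1 : ℝ) : Fin n → ℝ) +
          γ • (Pi.single q (1 : ℝ) : Fin n → ℝ)) -
        f (x + γ • (Pi.single q (1 : ℝ) : Fin n → ℝ)) -
        f (x + δ • (Pi.single p (1 : ℝ) : Fin n → ℝ)) + f x = 0 :=
  rectangle_difference_eq_zero_of_iteratedFDeriv_two_eq_zero hf hzero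

theorem no_direct_interaction_rectangle_difference_vanishes
    (n : ℕ) (f : (Fin n → ℝ) → ℝ) (hf : ContDiff ℝ 2 f)
    (p q : Fin n) (hpq : p ≠ q)
    (hzero : ∀ y : Fin n → ℝ,
      iteratedFDeriv ℝ 2 f y ![Pi.single p (1 : ℝ), Pi.single q (1 : ℝ)] = 0) :
    ∀ (x : Fin n → ℝ) (δ γ : ℝ),
      f (x + δ • (Pi.single p (1 : ℝ) : Fin n → ℝ) +
          γ • (Pi.single q (1 : ℝ) : Fin n → ℝ)) -
        f (x + γ • (Pi.single q (1 : ℝ) : Fin n → ℝ)) -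
        f (x + δ • (Pi.single p (1 : ℝ) : Fin n → ℝ)) + f x = 0 :=
  no_direct_interaction_rectangle_difference_vanishes_general n f hf p q hzero
end
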